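/- The Dirichlet series identity: for real s > 1, ∏_{p ≡ 1 (mod 4)} ((p^s + 1)/(p^s - 1)) = L(s, χ₄) · ζ(s) / ζ(2s) · (1 + 2^{-s})^{-1}, where the product is over primes p ≡ 1 (mod 4). -/

import Mathlib

/-!
Each side is an Euler product over all primes. With `t = p ^ s`, the factor of
`L(s, χ₄) ζ(s) / ζ(2s)` at `p` is `(1 - χ₄(p)/t)⁻¹ (1 - 1/t)⁻¹ (1 - 1/t²) = (t + 1)/(t - χ₄(p))`:
this is `(p^s + 1)/(p^s - 1)` for `p ≡ 1 (mod 4)`, `1` for `p ≡ 3 (mod 4)`, and `1 + 2^{-s}`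
for `p = 2`, which the last factor cancels.
-/

def chi4 (n : ℕ) : ℤ := if n % 4 = 1 then 1 else if n % 4 = 3 then -1 else 0

lemma chi4_eq_χ₄ (n : ℕ) : chi4 n = ZMod.χ₄ n := by
  rw [ZMod.χ₄_nat_eq_if_mod_four, chi4]
  split_ifs <;> omega

noncomputable def chi4Hom : ℕ →* ℝ where
  toFun n := chi4 n
  map_one' := by simp [chi4]
  map_mul' m n := by simp only [chi4_eq_χ₄, Nat.cast_mul, map_mul, Int.cast_mul]

lemma abs_chi4Hom_le_one (n : ℕ) : |chi4Hom n| ≤ 1 := by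
  change |((chi4 n : ℤ) : ℝ)| ≤ 1
  unfold chi4
  split_ifs <;> norm_num

noncomputable def divRpowHom (χ : ℕ →* ℝ) {s : ℝ} (hs : s ≠ 0) : ℕ →*₀ ℝ where
  toFun n := χ n / (n : ℝ) ^ s
  map_zero' := by simp [Real.zero_rpow hs]
  map_one' := by simp
  map_mul' m n := by
    simp only [map_mul, Nat.cast_mul, Real.mul_rpow (Nat.cast_nonneg m) (Nat.cast_nonneg n),
      mul_div_mul_comm]

lemma hasProd_eulerProduct_div_rpow (χ : ℕ →* ℝ) (hχ : ∀ n, |χ n| ≤ 1) {s : ℝ} (hs : 1 < s) :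
    HasProd (fun p : Nat.Primes ↦ (1 - χ p / ((p : ℕ) : ℝ) ^ s)⁻¹)
      (∑' n : ℕ, χ n / (n : ℝ) ^ s) := by
  refine EulerProduct.eulerProduct_completely_multiplicative_hasProd
    (f := divRpowHom χ (by positivity : s ≠ 0)) ?_
  refine (Real.summable_one_div_nat_rpow.mpr hs).of_nonneg_of_le (fun _ ↦ norm_nonneg _)
    fun n ↦ ?_
  change |χ n / (n : ℝ) ^ s| ≤ 1 / (n : ℝ) ^ s
  rw [abs_div, abs_of_nonneg (by positivity : (0 : ℝ) ≤ (n : ℝ) ^ s)]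
  gcongr
  exact hχ n

lemma tsum_one_div_nat_rpow_pos {s : ℝ} (hs : 1 < s) : 0 < ∑' n : ℕ, 1 / (n : ℝ) ^ s :=
  one_pos.trans_le <| by
    simpa using (Real.summable_one_div_nat_rpow.mpr hs).le_tsum 1 fun _ _ ↦ by positivity

lemma eulerFactor_eq {t c : ℝ} (ht : t ≠ 0) (ht1 : t ≠ 1) (htc : t ≠ c) :
    (1 - c / t)⁻¹ * (1 - 1 / t)⁻¹ / (1 - 1 / t ^ 2)⁻¹ = (t + 1) / (t - c) := by
  have : t - 1 ≠ 0 := sub_ne_zero.mpr ht1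
  have : t - c ≠ 0 := sub_ne_zero.mpr htc
  field_simp
  ring

lemma eulerFactor_chi4_eq {p : ℕ} (hp : p.Prime) {s : ℝ} (hs : 0 < s) :
    (1 - chi4Hom p / (p : ℝ) ^ s)⁻¹ * (1 - 1 / (p : ℝ) ^ s)⁻¹ / (1 - 1 / (p : ℝ) ^ (2 * s))⁻¹ *
        (if p = 2 then (1 + (2 : ℝ) ^ (-s))⁻¹ else 1) =
      if p % 4 = 1 then ((p : ℝ) ^ s + 1) / ((p : ℝ) ^ s - 1) else 1 := by
  have ht : 1 < (p : ℝ) ^ s := Real.one_lt_rpow (by exact_mod_cast hp.one_lt) hs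
  have hsq : (p : ℝ) ^ (2 * s) = ((p : ℝ) ^ s) ^ 2 := by
    rw [mul_comm, ← Real.rpow_mul_natCast (Nat.cast_nonneg p)]
    norm_num
  have htχ : (p : ℝ) ^ s ≠ chi4Hom p :=
    ((le_abs_self _).trans_lt ((abs_chi4Hom_le_one p).trans_lt ht)).ne'
  rw [hsq, eulerFactor_eq (by positivity) ht.ne' htχ]
  have hchi : chi4Hom p = chi4 p := rfl
  rcases hp.eq_two_or_odd with rfl | hodd
  · have hχ2 : chi4Hom 2 = 0 := by simp [hchi, chi4]
    rw [hχ2, if_pos rfl, if_neg (by decide), sub_zero, Real.rpow_neg zero_le_two,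
      Nat.cast_ofNat]
    field_simp
  · have hp2 : p ≠ 2 := by omega
    rcases (by omega : p % 4 = 1 ∨ p % 4 = 3) with h | h
    · simp [hchi, chi4, h, hp2]
    · have : (p : ℝ) ^ s + 1 ≠ 0 := by positivity
      simp [hchi, chi4, h, hp2, this]

lemma HasProd.subtype_and_of_ite {β α : Type*} [CommMonoid α] [TopologicalSpace α]
    {p q : β → Prop} [DecidablePred q] {g : β → α} {a : α}
    (h : HasProd (fun x : Subtype p ↦ if q x then g x else 1) a) :
    HasProd (fun x : {x // p x ∧ q x} ↦ g x) a := by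
  have hind : HasProd ({x : Subtype p | q x}.mulIndicator (fun x ↦ g x)) a := by
    refine h.congr_fun fun x ↦ ?_
    simp [Set.mulIndicator_apply]
  have hsub : HasProd (fun x : {x : Subtype p // q x} ↦ g x) a :=
    hasProd_subtype_iff_mulIndicator.mpr hind
  exact (Equiv.subtypeSubtypeEquivSubtypeInter p q).symm.hasProd_iff.mpr hsub

/-- For real `s > 1`,
`∏_{p ≡ 1 (4)} (p^s+1)/(p^s-1) = L(s,χ₄) ζ(s) / ζ(2s) · (1 + 2^{-s})⁻¹`. -/
theorem euler_product_identity (s : ℝ) (hs : 1 < s) :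
    (∏' p : {p : ℕ // p.Prime ∧ p % 4 = 1}, (((p : ℕ) : ℝ) ^ s + 1) / (((p : ℕ) : ℝ) ^ s - 1)) =
      (∑' n : ℕ, (chi4 n : ℝ) / (n : ℝ) ^ s) * (∑' n : ℕ, 1 / (n : ℝ) ^ s) /
        (∑' n : ℕ, 1 / (n : ℝ) ^ (2 * s)) * (1 + (2 : ℝ) ^ (-s))⁻¹ := by
  have hL := hasProd_eulerProduct_div_rpow chi4Hom abs_chi4Hom_le_one hs
  have hζ := hasProd_eulerProduct_div_rpow 1 (fun _ ↦ by simp) hs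
  have hζ2 := hasProd_eulerProduct_div_rpow 1 (fun _ ↦ by simp) (by linarith : 1 < 2 * s)
  have h2 := hasProd_ite_eq (⟨2, Nat.prime_two⟩ : Nat.Primes) (1 + (2 : ℝ) ^ (-s))⁻¹
  have hprod := ((hL.mul hζ).div₀ hζ2 (tsum_one_div_nat_rpow_pos (by linarith)).ne').mul h2
  simp only [MonoidHom.one_apply] at hprod
  refine (HasProd.subtype_and_of_ite (p := Nat.Prime) (q := (· % 4 = 1))
    (g := fun p ↦ ((p : ℝ) ^ s + 1) / ((p : ℝ) ^ s - 1)) (hprod.congr_fun fun p ↦ ?_)).tprod_eq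
  rw [← eulerFactor_chi4_eq p.2 (by linarith)]
  congr 2
  exact propext (Nat.Primes.coe_nat_inj p ⟨2, Nat.prime_two⟩)
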